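/- Let S be a finite distance monoid with arch(S) = n−k that contains the arithmetic progression {r < 2r < ⋯ < (n−k)r} where r is the smallest element of its Archimedean class. Define S_1 = {s ∈ S : 0 < s < r} and S_2 = {s ∈ S : s > (n−k)r} and S_0 = {s ∈ S : r ≤ s ≤ (n−k)r}. Then each of S_0 ∪ {0}, S_1 ∪ {0}, S_2 ∪ {0} is closed under ⊕, hence is a distance submonoid of S. -/
import Mathlib


/-- A distance magma: a commutative magma with identity `0` and a compatible
total order satisfying positivity and monotonicity of addition. -/
class DistanceMagma (R : Type*) extends LinearOrder R, Zero R where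
  dadd : R → R → R
  dadd_comm : ∀ r s : R, dadd r s = dadd s r
  dadd_zero : ∀ r : R, dadd r 0 = r
  le_dadd : ∀ r s : R, r ≤ dadd r s
  dadd_le_dadd : ∀ {r s t u : R}, r ≤ t → s ≤ u → dadd r s ≤ dadd t u

/-- A distance monoid is an associative distance magma. -/
class DistanceMonoid (R : Type*) extends DistanceMagma R where
  dadd_assoc : ∀ r s t : R, dadd (dadd r s) t = dadd r (dadd s t)

open DistanceMagma

/-- `dnsmul m r` is the `m`-fold sum `r ⊕ ⋯ ⊕ r`. -/
def dnsmul {R : Type*} [DistanceMagma R] : ℕ → R → R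
  | 0, _ => 0
  | (m+1), r => dadd r (dnsmul m r)

/-- `S` is a set of nonzero, mutually Archimedean elements. -/
def MutArch {R : Type*} [DistanceMagma R] (S : Set R) : Prop :=
  (∀ r ∈ S, r ≠ 0) ∧ ∀ r ∈ S, ∀ s ∈ S, ∃ m : ℕ, 1 ≤ m ∧ r ≤ dnsmul m s

/-- An Archimedean class: a maximal set of nonzero, mutually Archimedean elements. -/
def IsArchClass {R : Type*} [DistanceMagma R] (S : Set R) : Prop :=
  S.Nonempty ∧ MutArch S ∧ ∀ T : Set R, MutArch T → S ⊆ T → T = S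

/-- Sum of a list of elements of a distance magma (right-nested). -/
def dsum {R : Type*} [DistanceMagma R] : List R → R
  | [] => 0
  | a :: l => dadd a (dsum l)

/-- The Archimedean condition at level `m`: for every chain
`r₀ ≤ r₁ ≤ ⋯ ≤ r_m`, `r₀ ⊕ r₁ ⊕ ⋯ ⊕ r_m = r₁ ⊕ ⋯ ⊕ r_m`. -/
def ArchAt (R : Type*) [DistanceMagma R] (m : ℕ) : Prop :=
  ∀ f : ℕ → R, (∀ i j, i ≤ j → f i ≤ f j) →
    dsum ((List.range (m+1)).map f) = dsum ((List.range m).map (fun i => f (i+1)))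

/-- `R` has Archimedean complexity `n`: `n` is the least level at which
the Archimedean condition holds. -/
def HasArch (R : Type*) [DistanceMagma R] (n : ℕ) : Prop :=
  ArchAt R n ∧ ∀ m : ℕ, ArchAt R m → n ≤ m

section Aux

variable {R : Type*}

lemma zero_dadd [DistanceMagma R] (r : R) : dadd 0 r = r := by
  rw [dadd_comm]; exact dadd_zero r

lemma dnsmul_add [DistanceMonoid R] (m j : ℕ) (r : R) :
    dnsmul (m + j) r = dadd (dnsmul m r) (dnsmul j r) := by
  induction m with
  | zero => simp [dnsmul, zero_dadd]
  | succ m ih =>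
      have : m + 1 + j = (m + j) + 1 := by omega
      rw [this]
      show dadd r (dnsmul (m + j) r) = _
      rw [ih, ← DistanceMonoid.dadd_assoc]
      rfl

lemma dnsmul_le_dnsmul [DistanceMagma R] (m : ℕ) {s t : R} (h : s ≤ t) :
    dnsmul m s ≤ dnsmul m t := by
  induction m with
  | zero => exact le_refl _
  | succ m ih => exact dadd_le_dadd h ih

lemma dnsmul_mul [DistanceMonoid R] (m j : ℕ) (r : R) :
    dnsmul (m * j) r = dnsmul m (dnsmul j r) := by
  induction m with
  | zero => simp [dnsmul]
  | succ m ih =>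
      have : (m + 1) * j = j + m * j := by ring
      rw [this, dnsmul_add, ih]
      rfl

lemma dsum_const [DistanceMagma R] (m : ℕ) (r : R) :
    dsum ((List.range m).map (fun _ => r)) = dnsmul m r := by
  induction m with
  | zero => rfl
  | succ m ih =>
      rw [List.range_succ_eq_map, List.map_cons, List.map_map]
      show dadd r (dsum ((List.range m).map (fun _ => r))) = _
      rw [ih]; rfl

lemma dsum_replicate [DistanceMagma R] (m : ℕ) (r : R) :
    dsum (List.replicate m r) = dnsmul m r := by
  induction m with
  | zero => rfl
  | succ m ih =>
      show dadd r (dsum (List.replicate m r)) = _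
      rw [ih]; rfl

lemma dnsmul_collapse [DistanceMagma R] {N : ℕ} (h : ArchAt R N) (r : R) :
    dnsmul (N + 1) r = dnsmul N r := by
  have := h (fun _ => r) (fun i j _ => le_refl r)
  simpa [dsum_replicate] using this

lemma dnsmul_stable [DistanceMagma R] {N : ℕ} (h : ArchAt R N) (r : R) (j : ℕ) :
    dnsmul (N + j) r = dnsmul N r := by
  induction j with
  | zero => rfl
  | succ j ih =>
      have : N + (j + 1) = (N + j) + 1 := by omega
      rw [this]
      show dadd r (dnsmul (N + j) r) = _
      rw [ih]
      exact dnsmul_collapse h r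

end Aux

/-- Let `S` be a finite distance monoid with `arch(S) = n - k` containing the
arithmetic progression `r < 2r < ⋯ < (n-k)r`, where `r` is the smallest element
of its Archimedean class. Then each of `S₀ ∪ {0}`, `S₁ ∪ {0}`, `S₂ ∪ {0}` is
closed under `⊕`, where `S₁ = {s : 0 < s < r}`, `S₀ = {s : r ≤ s ≤ (n-k)r}`,
`S₂ = {s : s > (n-k)r}`. -/
theorem stmt19 (n k : ℕ) (hnk : 1 ≤ n - k)
    {R : Type*} [DistanceMonoid R] [Fintype R]
    (harch : HasArch R (n - k))
    (C : Set R) (hC : IsArchClass C) (r : R) (hrC : r ∈ C)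
    (hrmin : ∀ x ∈ C, r ≤ x)
    (hAP : ∀ j : ℕ, 1 ≤ j → j < n - k → dnsmul j r < dnsmul (j + 1) r) :
    (∀ a ∈ {s : R | r ≤ s ∧ s ≤ dnsmul (n - k) r} ∪ {0},
      ∀ b ∈ {s : R | r ≤ s ∧ s ≤ dnsmul (n - k) r} ∪ {0},
        DistanceMagma.dadd a b ∈ {s : R | r ≤ s ∧ s ≤ dnsmul (n - k) r} ∪ {0}) ∧
    (∀ a ∈ {s : R | 0 < s ∧ s < r} ∪ {0}, ∀ b ∈ {s : R | 0 < s ∧ s < r} ∪ {0},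
      DistanceMagma.dadd a b ∈ {s : R | 0 < s ∧ s < r} ∪ {0}) ∧
    (∀ a ∈ {s : R | dnsmul (n - k) r < s} ∪ {0},
      ∀ b ∈ {s : R | dnsmul (n - k) r < s} ∪ {0},
        DistanceMagma.dadd a b ∈ {s : R | dnsmul (n - k) r < s} ∪ {0}) := by
  set N := n - k with hN
  have hArch : ArchAt R N := harch.1
  refine ⟨?_, ?_, ?_⟩
  · -- S₀
    rintro a (⟨ha1, ha2⟩ | ha0) b (⟨hb1, hb2⟩ | hb0)
    · left
      refine ⟨le_trans ha1 (le_dadd a b), ?_⟩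
      calc dadd a b ≤ dadd (dnsmul N r) (dnsmul N r) := dadd_le_dadd ha2 hb2
        _ = dnsmul (N + N) r := (dnsmul_add N N r).symm
        _ = dnsmul N r := dnsmul_stable hArch r N
    · simp only [Set.mem_singleton_iff] at hb0
      subst hb0
      rw [dadd_zero]
      exact Or.inl ⟨ha1, ha2⟩
    · simp only [Set.mem_singleton_iff] at ha0
      subst ha0
      rw [zero_dadd]
      exact Or.inl ⟨hb1, hb2⟩
    · simp only [Set.mem_singleton_iff] at ha0 hb0
      subst ha0; subst hb0
      right
      simp [dadd_zero]
  · -- S₁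
    rintro a (⟨ha1, ha2⟩ | ha0) b (⟨hb1, hb2⟩ | hb0)
    · left
      refine ⟨lt_of_lt_of_le ha1 (le_dadd a b), ?_⟩
      by_contra hcon
      push_neg at hcon
      set c := max a b with hc
      have hc2 : c < r := max_lt ha2 hb2
      have hrcc : r ≤ dadd c c :=
        le_trans hcon (dadd_le_dadd (le_max_left a b) (le_max_right a b))
      have hcc2 : dadd c c = dnsmul 2 c := by simp [dnsmul, dadd_zero]
      have hMA : MutArch (C ∪ {c}) := by
        constructor
        · rintro x (hx | hx)
          · exact hC.2.1.1 x hx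
          · simp only [Set.mem_singleton_iff] at hx
            subst hx
            exact (lt_of_lt_of_le ha1 (le_max_left a b)).ne'
        · rintro x (hx | hx) y (hy | hy)
          · exact hC.2.1.2 x hx y hy
          · simp only [Set.mem_singleton_iff] at hy
            subst hy
            obtain ⟨m, hm1, hm⟩ := hC.2.1.2 x hx r hrC
            refine ⟨m * 2, by omega, ?_⟩
            calc x ≤ dnsmul m r := hm
              _ ≤ dnsmul m (dnsmul 2 c) :=
                dnsmul_le_dnsmul m (hcc2 ▸ hrcc)
              _ = dnsmul (m * 2) c := (dnsmul_mul m 2 c).symm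
          · simp only [Set.mem_singleton_iff] at hx
            subst hx
            refine ⟨1, le_refl 1, ?_⟩
            have : dnsmul 1 y = y := by simp [dnsmul, dadd_zero]
            rw [this]
            exact le_trans hc2.le (hrmin y hy)
          · simp only [Set.mem_singleton_iff] at hx hy
            subst hx; subst hy
            refine ⟨1, le_refl 1, ?_⟩
            simp [dnsmul, dadd_zero]
      have hEq : C ∪ {c} = C := hC.2.2 _ hMA Set.subset_union_left
      have hcC : c ∈ C := by
        rw [← hEq]; exact Or.inr rfl
      exact absurd (hrmin c hcC) (not_le.mpr hc2)
    · simp only [Set.mem_singleton_iff] at hb0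
      subst hb0
      rw [dadd_zero]
      exact Or.inl ⟨ha1, ha2⟩
    · simp only [Set.mem_singleton_iff] at ha0
      subst ha0
      rw [zero_dadd]
      exact Or.inl ⟨hb1, hb2⟩
    · simp only [Set.mem_singleton_iff] at ha0 hb0
      subst ha0; subst hb0
      right
      simp [dadd_zero]
  · -- S₂
    rintro a (ha | ha0) b (hb | hb0)
    · exact Or.inl (lt_of_lt_of_le ha (le_dadd a b))
    · simp only [Set.mem_singleton_iff] at hb0
      subst hb0
      rw [dadd_zero]
      exact Or.inl ha
    · simp only [Set.mem_singleton_iff] at ha0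
      subst ha0
      rw [zero_dadd]
      exact Or.inl hb
    · simp only [Set.mem_singleton_iff] at ha0 hb0
      subst ha0; subst hb0
      right
      simp [dadd_zero]
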